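/- A language L over A ∪ Ā is an XML-language if and only if: (i) L ⊆ D_α for some α ∈ A; (ii) for all a ∈ A and all w, w' ∈ F_a(L), the contexts coincide: C_L(w) = C_L(w'); and (iii) the surface S_a(L) is a regular set for every a ∈ A. -/

import Mathlib

variable {α : Type}

/-- Dyck words over `A ∪ Ā`: a letter is a pair `(a, true)` (opening tag `a`)
or `(a, false)` (closing tag `ā`). `IsDyck w` means `w` is well-balanced. -/
inductive IsDyck : List (α × Bool) → Prop
  | nil : IsDyck []
  | cons (a : α) {u v : List (α × Bool)} : IsDyck u → IsDyck v →
      IsDyck ((a, true) :: u ++ (a, false) :: v)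

/-- `IsDyckPrime a w`: `w` is a Dyck prime starting with the letter `a`,
i.e. `w = a u ā` with `u` well-balanced. Membership in `D_a`. -/
def IsDyckPrime (a : α) (w : List (α × Bool)) : Prop :=
  ∃ u, IsDyck u ∧ w = (a, true) :: u ++ [(a, false)]

/-- Membership in the set `D` of all Dyck primes. -/
def IsPrime (w : List (α × Bool)) : Prop := ∃ a, IsDyckPrime a w

/-- `F_a(L) = D_a ∩ F(L)`: factors of words of `L` that are Dyck primes starting with `a`. -/
def Fa (L : Set (List (α × Bool))) (a : α) : Set (List (α × Bool)) :=
  {w | IsDyckPrime a w ∧ ∃ v ∈ L, w <:+: v}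

/-- The surface `S_a(L)`: traces `a₁ ⋯ aₙ` of words `a u₁ ⋯ uₙ ā ∈ F_a(L)` with `uᵢ ∈ D_{aᵢ}`. -/
def Surface (L : Set (List (α × Bool))) (a : α) : Set (List α) :=
  {m | ∃ us : List (List (α × Bool)), List.Forall₂ IsDyckPrime m us ∧
      (a, true) :: us.flatten ++ [(a, false)] ∈ Fa L a}

/-- The language generated by nonterminal `X_a` in the XML-grammar with production
bodies `R : α → Set (List α)` (a body `a₁ ⋯ aₙ ∈ R a` encodes `X_a → a X_{a₁} ⋯ X_{aₙ} ā`). -/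
inductive Gen (R : α → Set (List α)) : α → List (α × Bool) → Prop
  | mk (a : α) (m : List α) (us : List (List (α × Bool))) :
      m ∈ R a → List.Forall₂ (Gen R) m us →
      Gen R a ((a, true) :: us.flatten ++ [(a, false)])

/-- The grammar `R` with axiom `X_{a₀}` is reduced: every nonterminal is accessible
from the axiom and every nonterminal is productive. -/
def Reduced (R : α → Set (List α)) (a₀ : α) : Prop :=
  (∀ a, Relation.ReflTransGen (fun x y => ∃ m ∈ R x, y ∈ m) a₀ a) ∧
  (∀ a, ∃ w, Gen R a w)

/-- An XML-grammar: each production body set `R_a` is a regular language over the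
nonterminal alphabet (identified with `A`). -/
def IsXMLGrammar (R : α → Set (List α)) : Prop :=
  ∀ a, Language.IsRegular (R a : Language α)

/-- An XML-language: a language generated by some XML-grammar. -/
def IsXMLLanguage (L : Set (List (α × Bool))) : Prop :=
  ∃ (a₀ : α) (R : α → Set (List α)), IsXMLGrammar R ∧ L = {w | Gen R a₀ w}

/-- The set of contexts of `w` in `L`: pairs `(x, y)` with `x w y ∈ L`. -/
def Ctx (L : Set (List (α × Bool))) (w : List (α × Bool)) :
    Set (List (α × Bool) × List (α × Bool)) :=
  {p | p.1 ++ w ++ p.2 ∈ L}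






lemma prefix_append_cases {β : Type*} {p u v : List β} (h : p <+: u ++ v) :
    p <+: u ∨ ∃ s, p = u ++ s ∧ s <+: v := by
  obtain ⟨t, ht⟩ := h
  rcases List.append_eq_append_iff.mp ht with ⟨a', h1, h2⟩ | ⟨c', h1, h2⟩
  · exact Or.inl ⟨a', h1.symm⟩
  · exact Or.inr ⟨c', h1, t, h2.symm⟩

def ht (w : List (α × Bool)) : ℤ :=
  (w.map (fun p => if p.2 then (1 : ℤ) else -1)).sum

lemma ht_append (u v : List (α × Bool)) : ht (u ++ v) = ht u + ht v := by simp [ht]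

lemma IsDyck.ht_eq_zero {w : List (α × Bool)} (h : IsDyck w) : ht w = 0 := by
  induction h with
  | nil => rfl
  | cons a hu hv ihu ihv => simp [ht] at *; omega

lemma IsDyck.ht_prefix_nonneg {w p : List (α × Bool)} (h : IsDyck w) (hp : p <+: w) :
    0 ≤ ht p := by
  induction h generalizing p with
  | nil => rw [List.prefix_nil.mp hp]; simp [ht]
  | cons a hu hv ihu ihv =>
    rw [List.cons_append] at hp
    rcases List.prefix_cons_iff.mp hp with rfl | ⟨t, rfl, htt⟩
    · simp [ht]
    · rcases prefix_append_cases htt with h' | ⟨s, rfl, hs⟩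
      · have := ihu h'
        simp [ht] at *; omega
      · rcases List.prefix_cons_iff.mp hs with rfl | ⟨r, rfl, hr⟩
        · have := hu.ht_eq_zero
          simp [ht] at *; omega
        · have h1 := hu.ht_eq_zero
          have h2 := ihv hr
          simp [ht] at *; omega

lemma IsDyck.ht_suffix_nonpos {w s : List (α × Bool)} (h : IsDyck w) (hs : s <:+ w) :
    ht s ≤ 0 := by
  obtain ⟨p, rfl⟩ := hs
  have h1 := h.ht_prefix_nonneg (List.prefix_append p s)
  have h2 := h.ht_eq_zero
  rw [ht_append] at h2; omega

lemma IsDyckPrime.isDyck {a : α} {w : List (α × Bool)} (h : IsDyckPrime a w) : IsDyck w := by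
  obtain ⟨u, hu, rfl⟩ := h
  exact IsDyck.cons a hu IsDyck.nil

lemma IsDyckPrime.ne_nil {a : α} {w : List (α × Bool)} (h : IsDyckPrime a w) : w ≠ [] := by
  obtain ⟨u, hu, rfl⟩ := h; simp

lemma IsDyck.append {u v : List (α × Bool)} (hu : IsDyck u) (hv : IsDyck v) :
    IsDyck (u ++ v) := by
  induction hu generalizing v with
  | nil => simpa
  | cons a h1 h2 ih1 ih2 =>
    have := IsDyck.cons a h1 (ih2 hv)
    simpa using this

lemma prime_prefix_ht {a : α} {w p : List (α × Bool)} (h : IsDyckPrime a w)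
    (hp : p <+: w) (h0 : p ≠ []) (h1 : p ≠ w) : 1 ≤ ht p := by
  obtain ⟨u, hu, rfl⟩ := h
  rw [List.cons_append] at hp
  rcases List.prefix_cons_iff.mp hp with rfl | ⟨t, rfl, htt⟩
  · exact absurd rfl h0
  · rcases prefix_append_cases htt with h' | ⟨s, rfl, hs⟩
    · have := hu.ht_prefix_nonneg h'
      simp [ht] at *; omega
    · rcases List.prefix_cons_iff.mp hs with rfl | ⟨r, rfl, hr⟩
      · have := hu.ht_eq_zero
        simp [ht] at *; omega
      · rw [List.prefix_nil.mp hr] at h1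
        simp at h1

lemma prime_prefix_eq {a b : α} {p q : List (α × Bool)} (hp : IsDyckPrime a p)
    (hq : IsDyckPrime b q) (hpq : p <+: q) : p = q := by
  by_contra hne
  have h1 := prime_prefix_ht hq hpq hp.ne_nil hne
  have h2 := hp.isDyck.ht_eq_zero
  omega

lemma prime_head {a b : α} {w : List (α × Bool)} (ha : IsDyckPrime a w)
    (hb : IsDyckPrime b w) : a = b := by
  obtain ⟨u, _, rfl⟩ := ha
  obtain ⟨v, _, h⟩ := hb
  rw [List.cons_append, List.cons_append] at h
  simpa using congrArg (·.head?) h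

section helpers
variable {β γ : Type*} {P Q : β → γ → Prop}

lemma forall₂_imp_mem {m : List β} {us : List γ} (h : List.Forall₂ P m us)
    (himp : ∀ c u, c ∈ m → u ∈ us → P c u → Q c u) : List.Forall₂ Q m us := by
  induction h with
  | nil => exact List.Forall₂.nil
  | cons h1 h2 ih =>
    exact List.Forall₂.cons (himp _ _ (by simp) (by simp) h1)
      (ih fun c u hc hu => himp c u (by simp [hc]) (by simp [hu]))

lemma forall₂_mem_right {m : List β} {us : List γ} (h : List.Forall₂ P m us)
    {u : γ} (hu : u ∈ us) : ∃ c ∈ m, P c u := by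
  induction h with
  | nil => simp at hu
  | cons h1 h2 ih =>
    rcases List.mem_cons.mp hu with rfl | hu
    · exact ⟨_, by simp, h1⟩
    · obtain ⟨c, hc, hp⟩ := ih hu
      exact ⟨c, by simp [hc], hp⟩

lemma forall₂_mem_left {m : List β} {us : List γ} (h : List.Forall₂ P m us)
    {c : β} (hc : c ∈ m) : ∃ u ∈ us, P c u := by
  induction h with
  | nil => simp at hc
  | cons h1 h2 ih =>
    rcases List.mem_cons.mp hc with rfl | hc
    · exact ⟨_, by simp, h1⟩
    · obtain ⟨u, hu, hp⟩ := ih hc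
      exact ⟨u, by simp [hu], hp⟩

lemma forall₂_zip {δ : Type*} {Q : β → δ → Prop} {m : List β} {us : List γ} {vs : List δ}
    (h1 : List.Forall₂ P m us) (h2 : List.Forall₂ Q m vs) :
    List.Forall₂ (fun u v => ∃ c, P c u ∧ Q c v) us vs := by
  induction h1 generalizing vs with
  | nil => cases h2; exact List.Forall₂.nil
  | cons hp _ ih =>
    cases h2 with
    | cons hq h2' => exact List.Forall₂.cons ⟨_, hp, hq⟩ (ih h2')

lemma forall₂_split {m : List β} {us₁ us₂ : List γ} {u : γ}
    (h : List.Forall₂ P m (us₁ ++ u :: us₂)) :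
    ∃ m₁ c m₂, m = m₁ ++ c :: m₂ ∧ List.Forall₂ P m₁ us₁ ∧ P c u ∧ List.Forall₂ P m₂ us₂ := by
  induction us₁ generalizing m with
  | nil =>
    cases h with
    | cons h1 h2 => exact ⟨[], _, _, rfl, List.Forall₂.nil, h1, h2⟩
  | cons v us₁ ih =>
    cases h with
    | cons h1 h2 =>
      obtain ⟨m₁, c, m₂, rfl, ha, hb, hc⟩ := ih h2
      exact ⟨_ :: m₁, c, m₂, rfl, List.Forall₂.cons h1 ha, hb, hc⟩

lemma exists_forall₂ {m : List β} (h : ∀ c ∈ m, ∃ u : γ, P c u) :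
    ∃ us, List.Forall₂ P m us := by
  induction m with
  | nil => exact ⟨[], List.Forall₂.nil⟩
  | cons c m ih =>
    obtain ⟨us, hus⟩ := ih fun c hc => h c (by simp [hc])
    obtain ⟨u, hu⟩ := h c (by simp)
    exact ⟨u :: us, List.Forall₂.cons hu hus⟩

end helpers

lemma flatten_isDyck {m : List α} {us : List (List (α × Bool))}
    (h : List.Forall₂ IsDyckPrime m us) : IsDyck us.flatten := by
  induction h with
  | nil => exact IsDyck.nil
  | cons h1 h2 ih => simpa using h1.isDyck.append ih

lemma flatten_inj {m m' : List α} {us us' : List (List (α × Bool))}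
    (h : List.Forall₂ IsDyckPrime m us) (h' : List.Forall₂ IsDyckPrime m' us')
    (heq : us.flatten = us'.flatten) : m = m' ∧ us = us' := by
  induction h generalizing m' us' with
  | nil =>
    cases h' with
    | nil => exact ⟨rfl, rfl⟩
    | cons h1 h2 =>
      exfalso; apply h1.ne_nil
      have := heq.symm
      simp only [List.flatten_nil, List.flatten_cons] at this
      exact (List.append_eq_nil_iff.mp this).1
  | @cons b u m₁ us₁ h1 h2 ih =>
    cases h' with
    | nil =>
      exfalso; apply h1.ne_nil
      simp only [List.flatten_nil, List.flatten_cons] at heq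
      exact (List.append_eq_nil_iff.mp heq).1
    | @cons c u' m₂ us₂ h1' h2' =>
      simp only [List.flatten_cons] at heq
      have hp1 : u <+: u ++ us₁.flatten := List.prefix_append _ _
      have hp2 : u' <+: u ++ us₁.flatten := ⟨us₂.flatten, heq.symm⟩
      have huu : u = u' := by
        rcases List.prefix_or_prefix_of_prefix hp1 hp2 with hp | hp
        · exact prime_prefix_eq h1 h1' hp
        · exact (prime_prefix_eq h1' h1 hp).symm
      subst huu
      obtain ⟨hm, hus⟩ := ih h2' (List.append_cancel_left heq)
      exact ⟨by rw [prime_head h1 h1', hm], by rw [hus]⟩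

lemma IsDyck.factor {u : List (α × Bool)} (h : IsDyck u) :
    ∃ (m : List α) (us : List (List (α × Bool))),
      List.Forall₂ IsDyckPrime m us ∧ u = us.flatten := by
  induction h with
  | nil => exact ⟨[], [], List.Forall₂.nil, rfl⟩
  | @cons a u v hu hv ihu ihv =>
    obtain ⟨m, us, h1, rfl⟩ := ihv
    exact ⟨a :: m, ((a, true) :: u ++ [(a, false)]) :: us,
      List.Forall₂.cons ⟨u, hu, rfl⟩ h1, by simp⟩

/-- A Dyck-prime factor of a flattened list of Dyck primes lies inside one of them. -/
lemma factor_in_flatten {m : List α} {us : List (List (α × Bool))}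
    (h : List.Forall₂ IsDyckPrime m us) {a : α} {w x y : List (α × Bool)}
    (hw : IsDyckPrime a w) (heq : us.flatten = x ++ w ++ y) :
    ∃ us₁ u us₂ x' y', us = us₁ ++ u :: us₂ ∧ x = us₁.flatten ++ x' ∧
      y = y' ++ us₂.flatten ∧ u = x' ++ w ++ y' := by
  induction h generalizing x y with
  | nil =>
    exfalso; apply hw.ne_nil
    have h' := heq.symm
    simp only [List.flatten_nil] at h'
    exact (List.append_eq_nil_iff.mp (List.append_eq_nil_iff.mp h').1).2
  | @cons c u m₂ us₂ h1 h2 ih =>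
    simp only [List.flatten_cons, List.append_assoc] at heq
    rcases List.append_eq_append_iff.mp heq with ⟨t, hx, hrest⟩ | ⟨t, hu, hwy⟩
    · -- x = u ++ t, us₂.flatten = t ++ (w ++ y)
      obtain ⟨us₁', u', us₂', x', y', rfl, hx', hy', hu'⟩ :=
        ih (x := t) (by rw [hrest, List.append_assoc])
      exact ⟨u :: us₁', u', us₂', x', y', rfl, by rw [hx, hx']; simp, hy', hu'⟩
    · -- u = x ++ t, w ++ y = t ++ us₂.flatten
      rcases List.append_eq_append_iff.mp hwy with ⟨s, ht, hy⟩ | ⟨s, hwts, hrest⟩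
      · -- t = w ++ s, y = s ++ us₂.flatten : w inside u
        exact ⟨[], u, us₂, x, s, rfl, by simp, hy, by rw [hu, ht, List.append_assoc]⟩
      · -- w = t ++ s, us₂.flatten = s ++ y
        by_cases hs : s = []
        · subst hs
          rw [List.append_nil] at hwts
          refine ⟨[], u, us₂, x, [], rfl, by simp, ?_, by rw [hu, hwts]; simp⟩
          simp only [List.nil_append] at hrest ⊢
          exact hrest.symm
        · by_cases htn : t = []
          · subst htn
            rw [List.append_nil] at hu
            simp only [List.nil_append] at hwts
            obtain ⟨us₁', u', us₂', x', y', rfl, hx', hy', hu'⟩ :=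
              ih (x := []) (y := y) (by rw [hrest, ← hwts]; simp)
            refine ⟨u :: us₁', u', us₂', x', y', rfl, ?_, hy', hu'⟩
            rw [← hu, List.flatten_cons, List.append_assoc, ← hx', List.append_nil]
          · -- t nonempty proper prefix of prime w, t suffix of Dyck prime u: contra
            exfalso
            have htw : t <+: w := hwts ▸ List.prefix_append _ _
            have htne : t ≠ w := by
              intro hh
              rw [hh] at hwts
              have : s = [] := by
                have := hwts
                conv at this => lhs; rw [← List.append_nil w]
                exact (List.append_cancel_left this).symm
              exact hs this
            have h1' := prime_prefix_ht hw htw htn htne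
            have h2' := h1.isDyck.ht_suffix_nonpos ⟨x, hu.symm⟩
            omega


lemma gen_prime_aux {R : α → Set (List α)} :
    ∀ n (w : List (α × Bool)), w.length ≤ n → ∀ a, Gen R a w → IsDyckPrime a w := by
  intro n
  induction n with
  | zero =>
    intro w hw a h
    cases h; simp at hw
  | succ n ih =>
    intro w hw a h
    cases h with
    | mk _ m us hm hf =>
      simp only [List.length_append, List.length_cons, List.length_singleton] at hw
      refine ⟨us.flatten, flatten_isDyck (m := m) ?_, rfl⟩
      refine forall₂_imp_mem hf fun c u hc hu hgen => ih u ?_ c hgen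
      have h1 := (List.infix_of_mem_flatten hu).length_le
      omega

lemma Gen.isDyckPrime {R : α → Set (List α)} {a : α} {w : List (α × Bool)}
    (h : Gen R a w) : IsDyckPrime a w :=
  gen_prime_aux w.length w le_rfl a h

lemma gen_forall₂_prime {R : α → Set (List α)} {m : List α} {us : List (List (α × Bool))}
    (h : List.Forall₂ (Gen R) m us) : List.Forall₂ IsDyckPrime m us :=
  List.Forall₂.imp (fun _ _ hg => Gen.isDyckPrime hg) h

/-- Key substitution lemma: a Dyck-prime factor of a generated word is itself generated
(as a subtree), and can be replaced by any other word generated from the same letter. -/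
lemma gen_subst_aux {R : α → Set (List α)} :
    ∀ n (v : List (α × Bool)), v.length ≤ n → ∀ b, Gen R b v →
    ∀ a (w x y : List (α × Bool)), IsDyckPrime a w → v = x ++ w ++ y →
      Gen R a w ∧ ∀ w', Gen R a w' → Gen R b (x ++ w' ++ y) := by
  intro n
  induction n with
  | zero =>
    intro v hv b h
    cases h; simp at hv
  | succ n ih =>
    intro v hv b h a w x y hw hxy
    rcases x with _ | ⟨p, x₁⟩
    · -- w is a prefix of v
      have hbv : IsDyckPrime b v := h.isDyckPrime
      have hwv : w = v := prime_prefix_eq hw hbv ⟨y, by rw [hxy]; simp⟩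
      have hy : y = [] := by
        rw [List.nil_append, ← hwv] at hxy
        have := congrArg List.length hxy
        simp at this
        simpa using this.symm
      subst hy
      have hab : a = b := prime_head hw (hwv ▸ hbv)
      subst hab hwv
      simp only [List.nil_append, List.append_nil] at hxy ⊢
      exact ⟨h, fun w' hw' => hw'⟩
    · -- x = p :: x₁
      cases h with
      | mk _ m us hm hf =>
        have hprime : List.Forall₂ IsDyckPrime m us := gen_forall₂_prime hf
        rw [List.cons_append, List.cons_append, List.cons_append] at hxy
        injection hxy with hp hxy2
        subst hp
        simp only [List.length_append, List.length_cons, List.length_singleton] at hv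
        rcases y.eq_nil_or_concat with rfl | ⟨y₁, z, rfl⟩
        · -- y = [] : contradiction via heights
          exfalso
          obtain ⟨w₀, hw₀, rfl⟩ := hw
          rw [List.append_nil] at hxy2
          rw [show x₁ ++ ((a, true) :: w₀ ++ [(a, false)]) =
              (x₁ ++ (a, true) :: w₀) ++ [(a, false)] from by simp] at hxy2
          have h2 : us.flatten = x₁ ++ (a, true) :: w₀ :=
            (List.append_inj' hxy2 (by simp)).1
          have h3 := (flatten_isDyck hprime).ht_suffix_nonpos ⟨x₁, h2.symm⟩
          have h4 := hw₀.ht_eq_zero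
          simp [ht] at h3 h4
          omega
        · -- y = y₁ ++ [z]
          simp only [List.concat_eq_append] at hxy2 ⊢
          rw [show x₁ ++ w ++ (y₁ ++ [z]) = (x₁ ++ w ++ y₁) ++ [z] from by simp] at hxy2
          have h2 : us.flatten = x₁ ++ w ++ y₁ := (List.append_inj' hxy2 (by simp)).1
          have hz : z = (b, false) := by
            have := (List.append_inj' hxy2 (by simp)).2
            simpa using this.symm
          subst hz
          obtain ⟨us₁, u, us₂, x', y', rfl, hx', hy', hu⟩ := factor_in_flatten hprime hw h2
          obtain ⟨m₁, c, m₂, rfl, hf₁, hgu, hf₂⟩ := forall₂_split hf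
          have hlen : u.length ≤ n := by
            have := (List.infix_of_mem_flatten (by simp : u ∈ us₁ ++ u :: us₂)).length_le
            omega
          obtain ⟨hgw, hrepl⟩ := ih u hlen c hgu a w x' y' hw hu
          refine ⟨hgw, fun w' hw' => ?_⟩
          have hg := Gen.mk b (m₁ ++ c :: m₂) (us₁ ++ (x' ++ w' ++ y') :: us₂) hm
            (List.rel_append hf₁ (List.Forall₂.cons (hrepl w' hw') hf₂))
          have heq2 : (b, true) :: (us₁ ++ (x' ++ w' ++ y') :: us₂).flatten ++ [(b, false)]
              = ((b, true) :: x₁) ++ w' ++ (y₁ ++ [(b, false)]) := by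
            rw [hx', hy']
            simp [List.append_assoc]
          rwa [heq2] at hg

lemma gen_subst {R : α → Set (List α)} {b : α} {v : List (α × Bool)} (h : Gen R b v)
    {a : α} {w x y : List (α × Bool)} (hw : IsDyckPrime a w) (hxy : v = x ++ w ++ y) :
    Gen R a w ∧ ∀ w', Gen R a w' → Gen R b (x ++ w' ++ y) :=
  gen_subst_aux v.length v le_rfl b h a w x y hw hxy


section regular
variable {T : Type}

lemma isRegular_congr {L₁ L₂ : Language T} (h : L₁ = L₂) (h₁ : L₁.IsRegular) :
    L₂.IsRegular := h ▸ h₁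

lemma isRegular_empty : Language.IsRegular (↑(∅ : Set (List T)) : Language T) := by
  refine ⟨Bool, inferInstance, ⟨fun _ _ => false, false, ∅⟩, ?_⟩
  ext x
  rw [DFA.mem_accepts]
  simp only [Set.mem_empty_iff_false, iff_false]
  exact ⟨fun h => h.elim, fun h => h⟩

lemma isRegular_inter {L₁ L₂ : Language T} (h₁ : L₁.IsRegular) (h₂ : L₂.IsRegular) :
    (L₁ ⊓ L₂ : Language T).IsRegular := by
  obtain ⟨σ₁, _, M₁, rfl⟩ := h₁
  obtain ⟨σ₂, _, M₂, rfl⟩ := h₂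
  refine ⟨σ₁ × σ₂, inferInstance,
    ⟨fun s c => (M₁.step s.1 c, M₂.step s.2 c), (M₁.start, M₂.start),
      {s | s.1 ∈ M₁.accept ∧ s.2 ∈ M₂.accept}⟩, ?_⟩
  have key : ∀ (x : List T) (s₁ : σ₁) (s₂ : σ₂),
      x.foldl (fun s c => (M₁.step s.1 c, M₂.step s.2 c)) (s₁, s₂)
        = (x.foldl M₁.step s₁, x.foldl M₂.step s₂) := by
    intro x
    induction x with
    | nil => intro s₁ s₂; rfl
    | cons c x ih => intro s₁ s₂; simpa using ih _ _
  ext x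
  rw [DFA.mem_accepts]
  show x.foldl _ _ ∈ _ ↔ _
  rw [key]
  constructor
  · rintro ⟨ha, hb⟩
    exact ⟨(DFA.mem_accepts M₁).mpr ha, (DFA.mem_accepts M₂).mpr hb⟩
  · rintro ⟨ha, hb⟩
    exact ⟨(DFA.mem_accepts M₁).mp ha, (DFA.mem_accepts M₂).mp hb⟩

lemma isRegular_allMem (P : Set T) : Language.IsRegular {m : List T | ∀ b ∈ m, b ∈ P} := by
  classical
  refine ⟨Bool, inferInstance,
    ⟨fun s c => s && decide (c ∈ P), true, {true}⟩, ?_⟩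
  have absorb : ∀ (y : List T),
      y.foldl (fun s c => s && decide (c ∈ P)) false = false := by
    intro y
    induction y with
    | nil => rfl
    | cons d y ihy => simpa using ihy
  have key : ∀ (x : List T),
      (x.foldl (fun s c => s && decide (c ∈ P)) true = true) ↔ ∀ b ∈ x, b ∈ P := by
    intro x
    induction x with
    | nil => simp
    | cons c x ih =>
      by_cases hc : c ∈ P
      · simpa [hc] using ih
      · simp [hc, absorb x]
  ext x
  rw [DFA.mem_accepts]
  show x.foldl _ _ ∈ _ ↔ _
  exact Set.mem_singleton_iff.trans (key x)

end regular

-- === Backward direction lemmas ===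
section backward
variable (L : Set (List (α × Bool)))

lemma fa_gen : ∀ n (w : List (α × Bool)), w.length ≤ n → ∀ a, w ∈ Fa L a →
    Gen (Surface L) a w := by
  intro n
  induction n with
  | zero =>
    intro w hw a hFa
    obtain ⟨⟨u, hu, rfl⟩, -⟩ := hFa
    simp at hw
  | succ n ih =>
    intro w hw a hFa
    obtain ⟨⟨u, hu, rfl⟩, v, hv, hinf⟩ := hFa
    obtain ⟨m, us, hf2, rfl⟩ := hu.factor
    simp only [List.length_append, List.length_cons, List.length_singleton] at hw
    have hflinf : us.flatten <:+: (a, true) :: us.flatten ++ [(a, false)] :=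
      ⟨[(a, true)], [(a, false)], by simp⟩
    have hGf : List.Forall₂ (Gen (Surface L)) m us := by
      refine forall₂_imp_mem hf2 fun c u' hc hu' hp' => ih u' ?_ c
        ⟨hp', v, hv, ((List.infix_of_mem_flatten hu').trans hflinf).trans hinf⟩
      have := (List.infix_of_mem_flatten hu').length_le
      omega
    have hmS : m ∈ Surface L a :=
      ⟨us, hf2, ⟨us.flatten, flatten_isDyck hf2, rfl⟩, v, hv, hinf⟩
    exact Gen.mk a m us hmS hGf

variable (hctx : ∀ a : α, ∀ w ∈ Fa L a, ∀ w' ∈ Fa L a, Ctx L w = Ctx L w')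
include hctx

lemma swap_ctx : ∀ us us' : List (List (α × Bool)),
    List.Forall₂ (fun u u' => ∃ c, u ∈ Fa L c ∧ u' ∈ Fa L c) us us' →
    ∀ p q : List (α × Bool), p ++ us'.flatten ++ q ∈ L → p ++ us.flatten ++ q ∈ L := by
  intro us us' h
  induction h with
  | nil => intro p q h; exact h
  | @cons u u' tl tl' hc htl ih =>
    intro p q hmem
    obtain ⟨c, hu, hu'⟩ := hc
    have h1 : p ++ u' ++ (tl'.flatten ++ q) ∈ L := by
      rw [show p ++ u' ++ (tl'.flatten ++ q) = p ++ (u' :: tl').flatten ++ q by simp]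
      exact hmem
    have h2 : (p, tl'.flatten ++ q) ∈ Ctx L u := by
      rw [hctx c u hu u' hu']
      exact h1
    have h3 : (p ++ u) ++ tl'.flatten ++ q ∈ L := by
      have : p ++ u ++ (tl'.flatten ++ q) ∈ L := h2
      rw [show (p ++ u) ++ tl'.flatten ++ q = p ++ u ++ (tl'.flatten ++ q) by simp]
      exact this
    have h4 := ih (p ++ u) q h3
    rw [show p ++ (u :: tl).flatten ++ q = (p ++ u) ++ tl.flatten ++ q by simp]
    exact h4

lemma gen_fa : ∀ n (w : List (α × Bool)), w.length ≤ n → ∀ a, Gen (Surface L) a w →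
    w ∈ Fa L a := by
  intro n
  induction n with
  | zero =>
    intro w hw a h
    cases h; simp at hw
  | succ n ih =>
    intro w hw a h
    cases h with
    | mk _ m us hm hf =>
      simp only [List.length_append, List.length_cons, List.length_singleton] at hw
      obtain ⟨us', hprime', ⟨hpv₀, v, hvL, x, y, hxy⟩⟩ := hm
      have hFam : List.Forall₂ (fun c u => u ∈ Fa L c) m us := by
        refine forall₂_imp_mem hf fun c u hc hu hg => ih u ?_ c hg
        have := (List.infix_of_mem_flatten hu).length_le
        omega
      have hinfv₀ : ((a, true) :: us'.flatten ++ [(a, false)]) <:+: v := ⟨x, y, hxy⟩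
      have hFam' : List.Forall₂ (fun c u' => u' ∈ Fa L c) m us' := by
        refine forall₂_imp_mem hprime' fun c u' hc hu' hp' => ⟨hp', v, hvL, ?_⟩
        exact ((List.infix_of_mem_flatten hu').trans
          ⟨[(a, true)], [(a, false)], by simp⟩).trans hinfv₀
      have hzip := forall₂_zip hFam hFam'
      have hL1 : (x ++ [(a, true)]) ++ us'.flatten ++ ([(a, false)] ++ y) ∈ L := by
        rw [show (x ++ [(a, true)]) ++ us'.flatten ++ ([(a, false)] ++ y)
            = x ++ ((a, true) :: us'.flatten ++ [(a, false)]) ++ y by simp]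
        rw [hxy]
        exact hvL
      have hL2 := swap_ctx L hctx us us' hzip _ _ hL1
      refine ⟨⟨us.flatten, flatten_isDyck (gen_forall₂_prime hf), rfl⟩,
        (x ++ [(a, true)]) ++ us.flatten ++ ([(a, false)] ++ y), hL2, ⟨x, y, by simp⟩⟩

end backward

-- === Forward direction lemmas ===
section forward
variable {R : α → Set (List α)} {a₀ : α}

lemma forward_ii (a : α) (w : List (α × Bool)) (hw : w ∈ Fa {w | Gen R a₀ w} a)
    (w' : List (α × Bool)) (hw' : w' ∈ Fa {w | Gen R a₀ w} a) :
    Ctx {w | Gen R a₀ w} w = Ctx {w | Gen R a₀ w} w' := by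
  obtain ⟨hp, v, hv, x, y, hxy⟩ := hw
  obtain ⟨hp', v', hv', x', y', hxy'⟩ := hw'
  have hgw : Gen R a w := (gen_subst hv hp hxy.symm).1
  have hgw' : Gen R a w' := (gen_subst hv' hp' hxy'.symm).1
  ext ⟨p, q⟩
  constructor
  · intro hmem
    exact (gen_subst (hmem : Gen R a₀ (p ++ w ++ q)) hp rfl).2 w' hgw'
  · intro hmem
    exact (gen_subst (hmem : Gen R a₀ (p ++ w' ++ q)) hp' rfl).2 w hgw

lemma forward_iii (hR : IsXMLGrammar R) (a : α) :
    Language.IsRegular (↑(Surface {w | Gen R a₀ w} a) : Language α) := by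
  classical
  set L : Set (List (α × Bool)) := {w | Gen R a₀ w} with hL
  by_cases hocc : ∃ v x y w₁, Gen R a₀ v ∧ IsDyckPrime a w₁ ∧ v = x ++ w₁ ++ y
  · -- Surface L a = R a ∩ {m | all letters productive}
    have hSurf : Surface L a = R a ∩ {m | ∀ b ∈ m, ∃ w, Gen R b w} := by
      ext m
      constructor
      · rintro ⟨us, hprime, ⟨hpw, v, hv, x, y, hxy⟩⟩
        have hgw : Gen R a ((a, true) :: us.flatten ++ [(a, false)]) :=
          (gen_subst (hv : Gen R a₀ v) hpw hxy.symm).1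
        generalize hww : ((a, true) :: us.flatten ++ [(a, false)] : List (α × Bool)) = w₀ at hgw
        cases hgw with
        | mk _ m' us' hm' hf' =>
          rw [List.cons_append, List.cons_append] at hww
          injection hww with h1 h2
          have hfl : us.flatten = us'.flatten := (List.append_inj' h2 (by simp)).1
          obtain ⟨hm, hus⟩ := flatten_inj hprime (gen_forall₂_prime hf') hfl
          subst hm
          refine ⟨hm', fun b hb => ?_⟩
          obtain ⟨u, -, hgu⟩ := forall₂_mem_left hf' hb
          exact ⟨u, hgu⟩
      · rintro ⟨hm, hall⟩
        obtain ⟨us, hf⟩ := exists_forall₂ (P := Gen R) hall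
        have hg₀ : Gen R a ((a, true) :: us.flatten ++ [(a, false)]) := Gen.mk a m us hm hf
        obtain ⟨v, x, y, w₁, hgv, hpw₁, hxy⟩ := hocc
        have hrepl := (gen_subst hgv hpw₁ hxy).2 _ hg₀
        exact ⟨us, gen_forall₂_prime hf, hg₀.isDyckPrime,
          x ++ ((a, true) :: us.flatten ++ [(a, false)]) ++ y, hrepl, x, y, rfl⟩
    have hcoe : (↑(Surface L a) : Language α)
        = (↑(R a) : Language α) ⊓ (↑({m | ∀ b ∈ m, ∃ w, Gen R b w} : Set (List α))
            : Language α) := by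
      rw [hSurf]; rfl
    rw [hcoe]
    exact isRegular_inter (hR a) (isRegular_allMem _)
  · have hSurf : Surface L a = ∅ := by
      ext m
      simp only [Set.mem_empty_iff_false, iff_false]
      rintro ⟨us, hprime, ⟨hpw, v, hv, x, y, hxy⟩⟩
      exact hocc ⟨v, x, y, _, hv, hpw, hxy.symm⟩
    rw [show (↑(Surface L a) : Language α) = ↑(∅ : Set (List α)) by rw [hSurf]]
    exact isRegular_empty

end forward

/-- Theorem 4.3 (syntactic characterization): `L` is an XML-language iff
(i) `L ⊆ D_α` for some `α ∈ A`; (ii) any two words of `F_a(L)` have the same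
contexts in `L`; (iii) every surface `S_a(L)` is regular. -/
theorem xml_language_characterization [Fintype α] (L : Set (List (α × Bool))) :
    IsXMLLanguage L ↔
      ((∃ a : α, L ⊆ {w | IsDyckPrime a w}) ∧
       (∀ a : α, ∀ w ∈ Fa L a, ∀ w' ∈ Fa L a, Ctx L w = Ctx L w') ∧
       (∀ a : α, Language.IsRegular (Surface L a : Language α))) := by
  constructor
  · rintro ⟨a₀, R, hXML, rfl⟩
    refine ⟨⟨a₀, fun w hw => Gen.isDyckPrime hw⟩, ?_, ?_⟩
    · intro a w hw w' hw'
      exact forward_ii a w hw w' hw'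
    · intro a
      exact forward_iii hXML a
  · rintro ⟨⟨a₀, hsub⟩, h2, h3⟩
    refine ⟨a₀, Surface L, h3, Set.ext fun w => ⟨fun hw => ?_, fun hg => ?_⟩⟩
    · exact fa_gen L w.length w le_rfl a₀ ⟨hsub hw, w, hw, List.infix_refl w⟩
    · have hFa : w ∈ Fa L a₀ := gen_fa L h2 w.length w le_rfl a₀ hg
      obtain ⟨hp, v, hv, hinf⟩ := hFa
      have hvFa : v ∈ Fa L a₀ := ⟨hsub hv, v, hv, List.infix_refl v⟩
      have hctxeq := h2 a₀ w ⟨hp, v, hv, hinf⟩ v hvFa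
      have hmem : (([], []) : List (α × Bool) × List (α × Bool)) ∈ Ctx L v := by
        show [] ++ v ++ [] ∈ L
        simpa using hv
      rw [← hctxeq] at hmem
      have hw : [] ++ w ++ [] ∈ L := hmem
      simpa using hw
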